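/- Let {s_1,...,s_K} be an (M,K,L)-schedule sequence set with respect to a partition of the K nodes into W nonempty groups whose smallest group size is k ≥ 2. For a node N_i ∈ G_m, let α_i be the number of t ∈ Z_L with s_i(t) = T_m, and for any node N_j let β_j^m be the number of t ∈ Z_L with s_j(t) = R_m. Then for all i ≠ j and the group index m with N_i ∈ G_m, one has α_i · β_j^m ≥ (k−1)·L. -/

import Mathlib

/-!
Fix the offset `d` of `j` relative to `i`. Among the slots where `i` transmits and `j` receives
`d` steps later there are at least `k - 1`: otherwise the at least `k - 2` other members of the
group of `i` could be shifted so that each transmits on one of these slots, and then `i` would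
never reach `j`. Summing over the `L` offsets counts every pair (transmit time of `i`, receive
time of `j`) exactly once, which gives `α_i β_j ≥ (k - 1) L`.
-/

/-- A schedule symbol for a system with `W` channels: `T m` means "transmit on
channel `m`" and `R r` means "receive on channel `r`". -/
inductive SchedSym (W : ℕ) where
  | T : Fin W → SchedSym W
  | R : Fin W → SchedSym W
deriving DecidableEq

/-- `IsScheduleSet W K L G s` says that `s` is an `(M,K,L)`-schedule sequence set
(for any number of channels `M ≥ W`) with respect to the partition of the `K` nodes
into the `W` groups given by the group-assignment map `G` (node `i` lies in group
`G i`). Sequences are modeled as `ℕ → SchedSym W`, indexed modulo `L`.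

* `own_channel`: a node in group `m` only uses the transmit symbol `T m`;
* `intra`: intra-group requirement (eq. (1) of the paper) for all offsets `τ ∈ Z_L^K`;
* `inter`: inter-group requirement (eq. (2) of the paper) for all offsets `τ ∈ Z_L^K`. -/
structure IsScheduleSet (W K L : ℕ) (G : Fin K → Fin W)
    (s : Fin K → ℕ → SchedSym W) : Prop where
  own_channel : ∀ (i : Fin K) (t : ℕ) (m : Fin W), s i t = SchedSym.T m → m = G i
  intra : ∀ τ : Fin K → ℕ, (∀ i, τ i < L) → ∀ i j : Fin K, i ≠ j → G i = G j →
    ∃ t < L, s i ((t + τ i) % L) = SchedSym.T (G i) ∧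
      s j ((t + τ j) % L) = SchedSym.R (G i) ∧
      ∀ x : Fin K, x ≠ i → x ≠ j → G x = G i → s x ((t + τ x) % L) ≠ SchedSym.T (G i)
  inter : ∀ τ : Fin K → ℕ, (∀ i, τ i < L) → ∀ i j : Fin K, G i ≠ G j →
    ∃ t < L, s i ((t + τ i) % L) = SchedSym.T (G i) ∧
      s j ((t + τ j) % L) = SchedSym.R (G i) ∧
      ∀ x : Fin K, x ≠ i → G x = G i → s x ((t + τ x) % L) ≠ SchedSym.T (G i)

/-- The size of group `m` under the group-assignment map `G`. -/
def groupSize {W K : ℕ} (G : Fin K → Fin W) (m : Fin W) : ℕ :=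
  (Finset.univ.filter (fun i => G i = m)).card

open Finset

theorem Finset.exists_surjOn_of_card_le {α β : Type*} [Nonempty α] {s : Finset α} {t : Finset β}
    (h : #s ≤ #t) : ∃ σ : β → α, Set.SurjOn σ t s := by
  rcases s.eq_empty_or_nonempty with rfl | ⟨a₀, ha₀⟩
  · exact ⟨fun _ => Classical.arbitrary α, by rw [coe_empty]; exact Set.surjOn_empty _ _⟩
  have : Nonempty s := ⟨⟨a₀, ha₀⟩⟩
  obtain ⟨e⟩ : Nonempty (s ↪ t) := Function.Embedding.nonempty_of_card_le (by simpa using h)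
  have he : Function.Injective fun a : s => (e a : β) := Subtype.val_injective.comp e.injective
  refine ⟨fun b => ((Function.invFun (fun a : s => (e a : β)) b : s) : α), fun a ha => ?_⟩
  exact ⟨e ⟨a, ha⟩, (e _).2, congrArg Subtype.val (Function.leftInverse_invFun he ⟨a, ha⟩)⟩

theorem Nat.add_mod_sub_add_mod {L t u : ℕ} (ht : t ≤ L) (hu : u < L) :
    (t + (u + L - t) % L) % L = u := by
  rw [Nat.add_mod_mod, show t + (u + L - t) = u + L by omega, Nat.add_mod_right,
    Nat.mod_eq_of_lt hu]

theorem Nat.add_mod_add_sub_mod {L t d : ℕ} (ht : t ≤ L) (hd : d < L) :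
    ((t + d) % L + L - t) % L = d := by
  rcases lt_or_ge (t + d) L with h | h
  · rw [Nat.mod_eq_of_lt h, show t + d + L - t = d + L by omega, Nat.add_mod_right,
      Nat.mod_eq_of_lt hd]
  · rw [Nat.mod_eq_sub_mod h, Nat.mod_eq_of_lt (a := t + d - L) (by omega),
      show t + d - L + L - t = d by omega, Nat.mod_eq_of_lt hd]

theorem Finset.card_filter_range_add_mod {L t : ℕ} (ht : t < L) (Q : ℕ → Prop)
    [DecidablePred Q] : #{d ∈ range L | Q ((t + d) % L)} = #{u ∈ range L | Q u} := by
  refine card_nbij' (fun d => (t + d) % L) (fun u => (u + L - t) % L) ?_ ?_ ?_ ?_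
  · intro d hd
    simp only [coe_filter, mem_range, Set.mem_ofPred_eq] at hd ⊢
    exact ⟨Nat.mod_lt _ (by omega), hd.2⟩
  · intro u hu
    simp only [coe_filter, mem_range, Set.mem_ofPred_eq] at hu ⊢
    exact ⟨Nat.mod_lt _ (by omega), by rw [Nat.add_mod_sub_add_mod ht.le hu.1]; exact hu.2⟩
  · intro d hd
    simp only [coe_filter, mem_range, Set.mem_ofPred_eq] at hd
    exact Nat.add_mod_add_sub_mod ht.le hd.1
  · intro u hu
    simp only [coe_filter, mem_range, Set.mem_ofPred_eq] at hu
    exact Nat.add_mod_sub_add_mod ht.le hu.1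

def coincidences (L d : ℕ) (P Q : ℕ → Prop) [DecidablePred P] [DecidablePred Q] : Finset ℕ :=
  {t ∈ range L | P t ∧ Q ((t + d) % L)}

theorem sum_card_coincidences (L : ℕ) (P Q : ℕ → Prop) [DecidablePred P] [DecidablePred Q] :
    ∑ d ∈ range L, #(coincidences L d P Q) = #{t ∈ range L | P t} * #{t ∈ range L | Q t} :=
  calc ∑ d ∈ range L, #(coincidences L d P Q)
      = ∑ d ∈ range L, ∑ t ∈ range L with P t, if Q ((t + d) % L) then 1 else 0 := by
        simp only [coincidences, ← filter_filter, card_filter]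
    _ = ∑ t ∈ range L with P t, #{d ∈ range L | Q ((t + d) % L)} := by
        rw [sum_comm]; simp only [card_filter]
    _ = ∑ t ∈ range L with P t, #{u ∈ range L | Q u} :=
        sum_congr rfl fun t ht => card_filter_range_add_mod (mem_range.1 (mem_filter.1 ht).1) Q
    _ = _ := by rw [sum_const, smul_eq_mul]

namespace IsScheduleSet

variable {W K L : ℕ} {G : Fin K → Fin W} {s : Fin K → ℕ → SchedSym W}

theorem exists_slot (hs : IsScheduleSet W K L G s) (τ : Fin K → ℕ) (hτ : ∀ x, τ x < L)
    {i j : Fin K} (hij : i ≠ j) :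
    ∃ t < L, s i ((t + τ i) % L) = SchedSym.T (G i) ∧
      s j ((t + τ j) % L) = SchedSym.R (G i) ∧
      ∀ x, x ≠ i → x ≠ j → G x = G i → s x ((t + τ x) % L) ≠ SchedSym.T (G i) := by
  by_cases hG : G i = G j
  · exact hs.intra τ hτ i j hij hG
  · obtain ⟨t, ht, hi, hj, hx⟩ := hs.inter τ hτ i j hG
    exact ⟨t, ht, hi, hj, fun x hxi _ => hx x hxi⟩

theorem exists_transmit (hs : IsScheduleSet W K L G s) (hL : 0 < L) {i j : Fin K}
    (hij : i ≠ j) : ∃ t < L, s i t = SchedSym.T (G i) := by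
  obtain ⟨t, ht, hi, -⟩ := hs.exists_slot (fun _ => 0) (fun _ => hL) hij
  exact ⟨t, ht, by rwa [add_zero, Nat.mod_eq_of_lt ht] at hi⟩

theorem card_erase_erase_lt_card_coincidences (hs : IsScheduleSet W K L G s) {i j : Fin K}
    (hij : i ≠ j) {d : ℕ} (hd : d < L) :
    #((({x | G x = G i} : Finset (Fin K)).erase i).erase j) <
      #(coincidences L d (s i · = SchedSym.T (G i)) (s j · = SchedSym.R (G i))) := by
  set X := (({x | G x = G i} : Finset (Fin K)).erase i).erase j
  set S := coincidences L d (s i · = SchedSym.T (G i)) (s j · = SchedSym.R (G i))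
  by_contra! hSX
  obtain ⟨σ, hσ⟩ := exists_surjOn_of_card_le hSX
  have hX : ∀ x ∈ X, x ≠ i ∧ x ≠ j ∧ G x = G i := fun x hx => by
    simp only [X, mem_erase, mem_filter, mem_univ, true_and] at hx
    exact ⟨hx.2.1, hx.1, hx.2.2⟩
  have htransmit : ∀ x ∈ X, ∃ u < L, s x u = SchedSym.T (G i) := fun x hx => by
    obtain ⟨u, hu, hxu⟩ := hs.exists_transmit (by omega) (hX x hx).1
    exact ⟨u, hu, (hX x hx).2.2 ▸ hxu⟩
  choose! u hu hsu using htransmit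
  -- each `x ∈ X` is shifted so that its transmission at time `u x` falls on the slot `σ x`
  let τ : Fin K → ℕ := fun x => if x = i then 0 else if x = j then d else (u x + L - σ x) % L
  have hτ : ∀ x, τ x < L := fun x => by
    simp only [τ]; split_ifs <;> first | omega | exact Nat.mod_lt _ (by omega)
  obtain ⟨t, htL, hi, hj, hsilent⟩ := hs.exists_slot τ hτ hij
  have htS : t ∈ S := by
    simp only [τ, if_pos, if_neg hij.symm, add_zero, Nat.mod_eq_of_lt htL] at hi hj
    simpa only [S, coincidences, mem_filter, mem_range] using ⟨htL, hi, hj⟩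
  obtain ⟨x, hxX, rfl⟩ := hσ htS
  obtain ⟨hxi, hxj, hxG⟩ := hX x hxX
  apply hsilent x hxi hxj hxG
  simp only [τ, if_neg hxi, if_neg hxj]
  rw [Nat.add_mod_sub_add_mod htL.le (hu x hxX), hsu x hxX]

theorem groupSize_sub_one_le_card_coincidences (hs : IsScheduleSet W K L G s) {i j : Fin K}
    (hij : i ≠ j) {d : ℕ} (hd : d < L) :
    groupSize G (G i) - 1 ≤
      #(coincidences L d (s i · = SchedSym.T (G i)) (s j · = SchedSym.R (G i))) := by
  have h := hs.card_erase_erase_lt_card_coincidences hij hd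
  have h₁ := pred_card_le_card_erase (s := ({x | G x = G i} : Finset (Fin K))) (a := i)
  have h₂ := pred_card_le_card_erase (s := (({x | G x = G i} : Finset (Fin K)).erase i)) (a := j)
  unfold groupSize
  omega

end IsScheduleSet

theorem schedule_set_weight_product_bound_general
    (K L W k : ℕ)
    (G : Fin K → Fin W)
    (hkmin : ∀ m : Fin W, k ≤ groupSize G m)
    (s : Fin K → ℕ → SchedSym W) (hs : IsScheduleSet W K L G s) :
    ∀ i j : Fin K, i ≠ j →
      (k - 1) * L ≤
        ((Finset.range L).filter (fun t => s i t = SchedSym.T (G i))).card *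
        ((Finset.range L).filter (fun t => s j t = SchedSym.R (G i))).card := by
  intro i j hij
  calc (k - 1) * L = #(range L) • (k - 1) := by rw [card_range, smul_eq_mul, mul_comm]
    _ ≤ ∑ d ∈ range L,
          #(coincidences L d (s i · = SchedSym.T (G i)) (s j · = SchedSym.R (G i))) :=
        card_nsmul_le_sum _ _ _ fun d hd => (Nat.sub_le_sub_right (hkmin (G i)) 1).trans
          (hs.groupSize_sub_one_le_card_coincidences hij (mem_range.1 hd))
    _ = _ := sum_card_coincidences L _ _

/-- for an `(M,K,L)`-schedule sequence set with respect to a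
partition into `W` nonempty groups with smallest group size `k ≥ 2`, if `α_i` is the
number of transmitting symbols `T_{G i}` in `s_i` and `β_j^m` the number of receiving
symbols `R_m` in `s_j` (over one period), then `α_i · β_j^{G i} ≥ (k−1)·L` for all
`i ≠ j`. -/
theorem schedule_set_weight_product_bound
    (M K L W k : ℕ) (hL : 0 < L) (hW : 1 ≤ W) (hWM : W ≤ M) (hMK : M ≤ K)
    (hk : 2 ≤ k)
    (G : Fin K → Fin W) (hG : Function.Surjective G)
    (hkmin : ∀ m : Fin W, k ≤ groupSize G m)
    (hkex : ∃ m : Fin W, groupSize G m = k)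
    (s : Fin K → ℕ → SchedSym W) (hs : IsScheduleSet W K L G s) :
    ∀ i j : Fin K, i ≠ j →
      (k - 1) * L ≤
        ((Finset.range L).filter (fun t => s i t = SchedSym.T (G i))).card *
        ((Finset.range L).filter (fun t => s j t = SchedSym.R (G i))).card :=
  schedule_set_weight_product_bound_general K L W k G hkmin s hs
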